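/- For any Hopf algebra H over a field k, the subspace I₂(H) is a coideal of the tensor-product coalgebra H ⊗ H: the counit ε_{H⊗H} = ε ⊗ ε vanishes on I₂(H), and Δ_{H⊗H}(I₂(H)) ⊆ I₂(H) ⊗ (H ⊗ H) + (H ⊗ H) ⊗ I₂(H). (Hence the quotient H^[2] = (H ⊗ H)/I₂(H) carries a unique coalgebra structure making the projection H ⊗ H → H^[2] a coalgebra morphism.) -/

import Mathlib

open TensorProduct

/-- `I₂(H)`: the subspace of `H ⊗ H` spanned by the elements
`φ(x₂y₂)·(x₁ ⊗ y₁) − φ(x₁y₁)·(x₂ ⊗ y₂)` for `x, y ∈ H` and linear forms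
`φ : H → k`, where `H ⊗ H` carries the tensor-product coalgebra structure. -/
noncomputable def lazySubspace2 (k : Type*) [Field k] (H : Type*)
    [Ring H] [HopfAlgebra k H] : Submodule k (H ⊗[k] H) :=
  Submodule.span k {z : H ⊗[k] H | ∃ (x y : H) (φ : H →ₗ[k] k),
    z = (TensorProduct.rid k (H ⊗[k] H))
          (TensorProduct.map
            (LinearMap.id : H ⊗[k] H →ₗ[k] H ⊗[k] H)
            (φ ∘ₗ LinearMap.mul' k H)
            (Coalgebra.comul (R := k) (x ⊗ₜ[k] y)))
      - (TensorProduct.lid k (H ⊗[k] H))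
          (TensorProduct.map
            (φ ∘ₗ LinearMap.mul' k H)
            (LinearMap.id : H ⊗[k] H →ₗ[k] H ⊗[k] H)
            (Coalgebra.comul (R := k) (x ⊗ₜ[k] y)))}

/-!
With `ψ = φ ∘ m`, the generator of `I₂(H)` attached to `x, y, φ` is `L_ψ (x ⊗ y)`, where
`L_ψ c = c₁ ψ(c₂) - ψ(c₁) c₂` is a linear endomorphism of the coalgebra `C = H ⊗ H`; as `L_ψ` is
linear, `I₂(H)` is the sum of the ranges of the `L_ψ`. Counitality gives `ε ∘ L_ψ = ψ - ψ = 0`,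
and coassociativity gives `Δ (L_ψ c) = L_ψ c₁ ⊗ c₂ + c₁ ⊗ L_ψ c₂`, the cross terms
`c₁ ψ(c₂) ⊗ c₃` cancelling. Only the coalgebra structure of `H ⊗ H` enters.
-/

open LinearMap

section RangeTensor

variable {R M N P : Type*} [CommSemiring R] [AddCommMonoid M] [Module R M] [AddCommMonoid N]
  [Module R N] [AddCommMonoid P] [Module R P] {p : Submodule R M} {f : N →ₗ[R] M}

theorem LinearMap.range_rTensor_le_range_rTensor_subtype (hf : range f ≤ p) :
    range (rTensor P f) ≤ range (rTensor P p.subtype) := by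
  rw [← LinearMap.subtype_comp_codRestrict f p fun n => hf ⟨n, rfl⟩, rTensor_comp]
  exact range_comp_le_range _ _

theorem LinearMap.range_lTensor_le_range_lTensor_subtype (hf : range f ≤ p) :
    range (lTensor P f) ≤ range (lTensor P p.subtype) := by
  rw [← LinearMap.subtype_comp_codRestrict f p fun n => hf ⟨n, rfl⟩, lTensor_comp]
  exact range_comp_le_range _ _

end RangeTensor

namespace Coalgebra

section Contract

variable {R C : Type*} [CommSemiring R] [AddCommMonoid C] [Module R C] [Coalgebra R C]

noncomputable def contractRight (ψ : C →ₗ[R] R) : C →ₗ[R] C :=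
  (_root_.TensorProduct.rid R C).toLinearMap ∘ₗ lTensor C ψ ∘ₗ comul

noncomputable def contractLeft (ψ : C →ₗ[R] R) : C →ₗ[R] C :=
  (_root_.TensorProduct.lid R C).toLinearMap ∘ₗ rTensor C ψ ∘ₗ comul

theorem counit_contractRight (ψ : C →ₗ[R] R) (c : C) : counit (contractRight ψ c) = ψ c := by
  have h : counit ∘ₗ (_root_.TensorProduct.rid R C).toLinearMap ∘ₗ lTensor C ψ =
      ψ ∘ₗ (_root_.TensorProduct.lid R C).toLinearMap ∘ₗ rTensor C counit := by
    ext; simp [mul_comm]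
  simpa [contractRight] using congr($h (comul c))

theorem counit_contractLeft (ψ : C →ₗ[R] R) (c : C) : counit (contractLeft ψ c) = ψ c := by
  have h : counit ∘ₗ (_root_.TensorProduct.lid R C).toLinearMap ∘ₗ rTensor C ψ =
      ψ ∘ₗ (_root_.TensorProduct.rid R C).toLinearMap ∘ₗ lTensor C counit := by
    ext; simp [mul_comm]
  simpa [contractLeft] using congr($h (comul c))

theorem comul_contractRight (ψ : C →ₗ[R] R) (c : C) :
    comul (contractRight ψ c) = lTensor C (contractRight ψ) (comul c) := by
  have hnat : comul ∘ₗ (_root_.TensorProduct.rid R C).toLinearMap ∘ₗ lTensor C ψ =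
      (_root_.TensorProduct.rid R (C ⊗[R] C)).toLinearMap ∘ₗ lTensor (C ⊗[R] C) ψ ∘ₗ
        rTensor C comul := by
    ext; simp
  have hassoc : (_root_.TensorProduct.rid R (C ⊗[R] C)).toLinearMap ∘ₗ lTensor (C ⊗[R] C) ψ ∘ₗ
      (_root_.TensorProduct.assoc R C C C).symm.toLinearMap =
      lTensor C ((_root_.TensorProduct.rid R C).toLinearMap ∘ₗ lTensor C ψ) := by
    ext; simp
  calc comul (contractRight ψ c)
      = _root_.TensorProduct.rid R (C ⊗[R] C) (lTensor _ ψ (rTensor C comul (comul c))) :=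
        congr($hnat (comul c))
    _ = _root_.TensorProduct.rid R (C ⊗[R] C)
          (lTensor _ ψ ((_root_.TensorProduct.assoc R C C C).symm (lTensor C comul (comul c)))) := by
        rw [coassoc_symm_apply]
    _ = lTensor C ((_root_.TensorProduct.rid R C).toLinearMap ∘ₗ lTensor C ψ)
          (lTensor C comul (comul c)) := congr($hassoc _)
    _ = lTensor C (contractRight ψ) (comul c) := by
        rw [← comp_apply (g := lTensor C comul), ← lTensor_comp]; rfl

theorem comul_contractLeft (ψ : C →ₗ[R] R) (c : C) :
    comul (contractLeft ψ c) = rTensor C (contractLeft ψ) (comul c) := by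
  have hnat : comul ∘ₗ (_root_.TensorProduct.lid R C).toLinearMap ∘ₗ rTensor C ψ =
      (_root_.TensorProduct.lid R (C ⊗[R] C)).toLinearMap ∘ₗ rTensor (C ⊗[R] C) ψ ∘ₗ
        lTensor C comul := by
    ext; simp
  have hassoc : (_root_.TensorProduct.lid R (C ⊗[R] C)).toLinearMap ∘ₗ rTensor (C ⊗[R] C) ψ ∘ₗ
      (_root_.TensorProduct.assoc R C C C).toLinearMap =
      rTensor C ((_root_.TensorProduct.lid R C).toLinearMap ∘ₗ rTensor C ψ) := by
    ext; simp [smul_tmul']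
  calc comul (contractLeft ψ c)
      = _root_.TensorProduct.lid R (C ⊗[R] C) (rTensor _ ψ (lTensor C comul (comul c))) :=
        congr($hnat (comul c))
    _ = _root_.TensorProduct.lid R (C ⊗[R] C)
          (rTensor _ ψ ((_root_.TensorProduct.assoc R C C C) (rTensor C comul (comul c)))) := by
        rw [coassoc_apply]
    _ = rTensor C ((_root_.TensorProduct.lid R C).toLinearMap ∘ₗ rTensor C ψ)
          (rTensor C comul (comul c)) := congr($hassoc _)
    _ = rTensor C (contractLeft ψ) (comul c) := by
        rw [← comp_apply (g := rTensor C comul), ← rTensor_comp]; rfl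

theorem rTensor_contractRight_comul (ψ : C →ₗ[R] R) (c : C) :
    rTensor C (contractRight ψ) (comul c) = lTensor C (contractLeft ψ) (comul c) := by
  have hassoc : rTensor C ((_root_.TensorProduct.rid R C).toLinearMap ∘ₗ lTensor C ψ) ∘ₗ
      (_root_.TensorProduct.assoc R C C C).symm.toLinearMap =
      lTensor C ((_root_.TensorProduct.lid R C).toLinearMap ∘ₗ rTensor C ψ) := by
    ext; simp [smul_tmul']
  calc rTensor C (contractRight ψ) (comul c)
      = rTensor C ((_root_.TensorProduct.rid R C).toLinearMap ∘ₗ lTensor C ψ)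
          (rTensor C comul (comul c)) := by
        rw [← comp_apply (g := rTensor C comul), ← rTensor_comp]; rfl
    _ = rTensor C ((_root_.TensorProduct.rid R C).toLinearMap ∘ₗ lTensor C ψ)
          ((_root_.TensorProduct.assoc R C C C).symm (lTensor C comul (comul c))) := by
        rw [coassoc_symm_apply]
    _ = lTensor C ((_root_.TensorProduct.lid R C).toLinearMap ∘ₗ rTensor C ψ)
          (lTensor C comul (comul c)) := congr($hassoc _)
    _ = lTensor C (contractLeft ψ) (comul c) := by
        rw [← comp_apply (g := lTensor C comul), ← lTensor_comp]; rfl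

end Contract

variable {R C : Type*} [CommRing R] [AddCommGroup C] [Module R C] [Coalgebra R C]

noncomputable def lazyMap (ψ : C →ₗ[R] R) : C →ₗ[R] C := contractRight ψ - contractLeft ψ

theorem counit_lazyMap (ψ : C →ₗ[R] R) (c : C) : counit (R := R) (lazyMap ψ c) = 0 := by
  rw [lazyMap, LinearMap.sub_apply, map_sub, counit_contractRight, counit_contractLeft, sub_self]

theorem comul_lazyMap (ψ : C →ₗ[R] R) (c : C) :
    comul (lazyMap ψ c) = rTensor C (lazyMap ψ) (comul c) + lTensor C (lazyMap ψ) (comul c) := by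
  simp only [lazyMap, LinearMap.sub_apply, map_sub, rTensor_sub, lTensor_sub, comul_contractRight,
    comul_contractLeft, rTensor_contractRight_comul]
  abel

theorem isCoideal_iSup_range_lazyMap {ι : Type*} (ψ : ι → C →ₗ[R] R) :
    (⨆ i, range (lazyMap (ψ i))).IsCoideal := by
  set I := ⨆ i, range (lazyMap (ψ i))
  have hle : ∀ i, range (lazyMap (ψ i)) ≤ I := le_iSup (fun i => range (lazyMap (ψ i)))
  have hcounit : I ≤ ker (counit (R := R) (A := C)) :=
    iSup_le fun i => by rintro _ ⟨c, rfl⟩; exact counit_lazyMap (ψ i) c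
  have hcomul : I ≤ (range (lTensor C I.subtype) ⊔ range (rTensor C I.subtype)).comap comul := by
    refine iSup_le fun i => ?_
    rintro _ ⟨c, rfl⟩
    rw [Submodule.mem_comap, comul_lazyMap, add_comm]
    exact Submodule.add_mem_sup (range_lTensor_le_range_lTensor_subtype (hle i) ⟨_, rfl⟩)
      (range_rTensor_le_range_rTensor_subtype (hle i) ⟨_, rfl⟩)
  exact (Submodule.isCoideal_iff_comul_mem I).2 ⟨fun x hx => hcounit hx, fun x hx => hcomul hx⟩

end Coalgebra

open Coalgebra

theorem lazySubspace2_eq_iSup_range_lazyMap (k : Type*) [Field k] (H : Type*) [Ring H]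
    [HopfAlgebra k H] :
    lazySubspace2 k H = ⨆ φ : H →ₗ[k] k, range (lazyMap (φ ∘ₗ mul' k H)) := by
  simp_rw [range_eq_map, ← TensorProduct.span_tmul_eq_top, Submodule.map_span,
    ← Submodule.span_iUnion, lazySubspace2]
  congr 1
  ext z
  simp only [Set.mem_ofPred_eq, Set.mem_iUnion, Set.mem_image]
  constructor
  · rintro ⟨x, y, φ, rfl⟩
    exact ⟨φ, x ⊗ₜ y, ⟨x, y, rfl⟩, rfl⟩
  · rintro ⟨φ, _, ⟨x, y, rfl⟩, rfl⟩
    exact ⟨x, y, φ, rfl⟩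

/-- For any Hopf algebra `H`, the subspace `I₂(H)` is a coideal
of the tensor-product coalgebra `H ⊗ H`: the counit `ε ⊗ ε` vanishes on it and
`Δ_{H⊗H}(I₂(H)) ⊆ I₂(H) ⊗ (H ⊗ H) + (H ⊗ H) ⊗ I₂(H)`. -/
theorem lazySubspace2_isCoideal (k : Type*) [Field k] (H : Type*)
    [Ring H] [HopfAlgebra k H] :
    ∀ z ∈ lazySubspace2 k H,
      Coalgebra.counit (R := k) z = 0 ∧
      Coalgebra.comul (R := k) z ∈
        LinearMap.range (TensorProduct.map (lazySubspace2 k H).subtype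
          (LinearMap.id : H ⊗[k] H →ₗ[k] H ⊗[k] H)) ⊔
        LinearMap.range (TensorProduct.map
          (LinearMap.id : H ⊗[k] H →ₗ[k] H ⊗[k] H)
          (lazySubspace2 k H).subtype) := by
  have hI : (lazySubspace2 k H).IsCoideal := by
    rw [lazySubspace2_eq_iSup_range_lazyMap]; exact isCoideal_iSup_range_lazyMap _
  obtain ⟨hcounit, hcomul⟩ := (Submodule.isCoideal_iff_comul_mem _).1 hI
  exact fun z hz => ⟨hcounit z hz, by rw [sup_comm]; exact hcomul z hz⟩
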